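/- arXiv:2105.09673 — 4 statements merged into one kernel-verified Lean document; each statement's English description precedes it below -/
import Mathlib

section
/- The binary search invariant: let f : ℝ → ℝ be continuous piecewise affine with all critical points in (−1/δ, 1/δ) and each affine piece of length at least δ, no two pieces sharing the same affine function. Then after k iterations of bisection (keeping the left endpoint if the local affine function there matches the affine function just left of the midpoint), the interval [x_L, x_R] has length (2/δ)·2^{−k} and still contains the left-most critical point x* with x_L ≤ x* < x_R. -/
/-!
The midpoint test "f agrees with the left-most affine piece just left of m" holds exactly when
m ≤ x*, so the algorithm is plain bisection for the predicate `· ≤ x*`: each step halves the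
interval and keeps x* in [x_L, x_R).
-/

open Set

theorem exists_eqOn_Ioo_left_iff_le {f g : ℝ → ℝ} {xstar : ℝ}
    (hle : ∀ x ≤ xstar, f x = g x)
    (hgt : ∀ y > xstar, ∀ ε > 0, ∃ z ∈ Ioo (y - ε) y, f z ≠ g z) (m : ℝ) :
    (∃ ε > 0, ∀ z ∈ Ioo (m - ε) m, f z = g z) ↔ m ≤ xstar := by
  constructor
  · rintro ⟨ε, hε, heq⟩
    by_contra! hm
    obtain ⟨z, hz, hne⟩ := hgt m hm ε hε
    exact hne (heq z hz)
  · intro hm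
    exact ⟨1, one_pos, fun z hz => hle z (hz.2.le.trans hm)⟩

theorem bisection_length_and_mem_Ico {x : ℝ} {a b : ℕ → ℝ} (h0 : x ∈ Ico (a 0) (b 0))
    (hstep : ∀ k, if (a k + b k) / 2 ≤ x
      then a (k + 1) = (a k + b k) / 2 ∧ b (k + 1) = b k
      else a (k + 1) = a k ∧ b (k + 1) = (a k + b k) / 2) :
    ∀ k, b k - a k = (b 0 - a 0) * 2⁻¹ ^ k ∧ x ∈ Ico (a k) (b k) := by
  intro k
  induction k with
  | zero => simpa using h0
  | succ k ih =>
    obtain ⟨hlen, hxa, hxb⟩ := ih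
    have hs := hstep k
    split_ifs at hs with hm
    · refine ⟨?_, hs.1 ▸ hm, hs.2 ▸ hxb⟩
      rw [hs.1, hs.2, pow_succ, ← mul_assoc, ← hlen]; ring
    · refine ⟨?_, hs.1 ▸ hxa, hs.2 ▸ not_le.mp hm⟩
      rw [hs.1, hs.2, pow_succ, ← mul_assoc, ← hlen]; ring

open Classical in
/-- `xstar` is the left-most critical point: `f` lies on `Λ_L = sL * · + tL` on `(-∞, xstar]`,
and on no left-neighbourhood of a point beyond `xstar`. -/
theorem bisection_invariant_general (f : ℝ → ℝ) (δ : ℝ)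
    (sL tL : ℝ) (xstar : ℝ)
    (hstar : xstar ∈ Set.Ioo (-(1/δ)) (1/δ))
    (hfL : ∀ x ≤ xstar, f x = sL * x + tL)
    (hnomatch : ∀ y > xstar, ∀ ε > 0, ∃ z ∈ Set.Ioo (y - ε) y, f z ≠ sL * z + tL)
    (xL xR : ℕ → ℝ)
    (h0L : xL 0 = -(1/δ)) (h0R : xR 0 = 1/δ)
    (hstep : ∀ k,
      if ∃ ε > 0, ∀ z ∈ Set.Ioo ((xL k + xR k) / 2 - ε) ((xL k + xR k) / 2),
          f z = sL * z + tL
      then xL (k+1) = (xL k + xR k) / 2 ∧ xR (k+1) = xR k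
      else xL (k+1) = xL k ∧ xR (k+1) = (xL k + xR k) / 2) :
    ∀ k, xR k - xL k = (2 / δ) * (2 : ℝ)⁻¹ ^ k ∧ xL k ≤ xstar ∧ xstar < xR k := by
  have htest := exists_eqOn_Ioo_left_iff_le hfL hnomatch
  have hbisect : ∀ k, if (xL k + xR k) / 2 ≤ xstar
      then xL (k + 1) = (xL k + xR k) / 2 ∧ xR (k + 1) = xR k
      else xL (k + 1) = xL k ∧ xR (k + 1) = (xL k + xR k) / 2 := by
    intro k
    simpa only [htest] using hstep k
  have h0 : xstar ∈ Ico (xL 0) (xR 0) := by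
    rw [h0L, h0R]; exact ⟨hstar.1.le, hstar.2⟩
  intro k
  obtain ⟨hlen, hmem⟩ := bisection_length_and_mem_Ico h0 hbisect k
  refine ⟨?_, hmem⟩
  rw [hlen, h0L, h0R]; ring

open Classical in
/-- the binary-search invariant. `xstar` is the left-most critical
point of `f`: `f` agrees with the affine map `Λ_L = sL * · + tL` on `(-∞, xstar]`,
and (since no two pieces share the same affine function and pieces have length at
least δ) no left-neighborhood of a point `> xstar` agrees with `Λ_L`. The
bisection keeps the left endpoint when the local affine function in the left
proximity of the midpoint matches `Λ_L` (the local affine function at `x_L`). -/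
theorem bisection_invariant (f : ℝ → ℝ) (δ : ℝ) (hδ : 0 < δ)
    (sL tL : ℝ) (xstar : ℝ)
    (hstar : xstar ∈ Set.Ioo (-(1/δ)) (1/δ))
    (hfL : ∀ x ≤ xstar, f x = sL * x + tL)
    (hnomatch : ∀ y > xstar, ∀ ε > 0, ∃ z ∈ Set.Ioo (y - ε) y, f z ≠ sL * z + tL)
    (xL xR : ℕ → ℝ)
    (h0L : xL 0 = -(1/δ)) (h0R : xR 0 = 1/δ)
    (hstep : ∀ k,
      if ∃ ε > 0, ∀ z ∈ Set.Ioo ((xL k + xR k) / 2 - ε) ((xL k + xR k) / 2),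
          f z = sL * z + tL
      then xL (k+1) = (xL k + xR k) / 2 ∧ xR (k+1) = xR k
      else xL (k+1) = xL k ∧ xR (k+1) = (xL k + xR k) / 2) :
    ∀ k, xR k - xL k = (2 / δ) * (2 : ℝ)⁻¹ ^ k ∧ xL k ≤ xstar ∧ xstar < xR k :=
  bisection_invariant_general f δ sL tL xstar hstar hfL hnomatch xL xR h0L h0R hstep
end

section
/- Sign-identification test: let N(x) = F(σ(Wx + b)) where W ∈ ℝ^{d₁×d} has linearly independent unit-norm rows w_i, b ∈ ℝ^{d₁}, σ is coordinatewise ReLU, and F : ℝ^{d₁} → ℝ has nonzero directional derivatives in the directions ±e_k at every point of the nonnegative orthant. Let x satisfy w_1·x + b_1 = 0 with w_i·x + b_i > 0 for all i ≠ 1, and let z be a unit vector with w_i·z = 0 for i ≠ 1 and w_1·z > 0. Then for all sufficiently small ε > 0, N(x + εz) ≠ N(x) while N(x − εz) = N(x). -/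
/-!
Moving from `x` along `±z` leaves every pre-activation `wᵢ·x + bᵢ` with `i ≠ j₀` unchanged and
moves only the `j₀`-th one, which sits exactly at the ReLU kink. So the hidden layer at `x + s z`
is `σ(Wx + b) + max(s ⟨w_{j₀}, z⟩, 0) e_{j₀}`: for `s < 0` nothing changes, while for `s > 0`
the point moves by a small positive step along `e_{j₀}` from a point of the nonnegative orthant,
where `F` has a nonzero one-sided derivative and hence cannot stay constant.
-/

open Filter Topology

lemma relu_affine_add_smul_eq_add_single {ι E : Type*} [DecidableEq ι] [NormedAddCommGroup E]
    [InnerProductSpace ℝ E] (w : ι → E) (b : ι → ℝ) {j₀ : ι} {x z : E}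
    (hx : inner ℝ (w j₀) x + b j₀ = 0) (hz : ∀ i, i ≠ j₀ → inner ℝ (w i) z = (0 : ℝ)) (s : ℝ) :
    (fun i => max (inner ℝ (w i) (x + s • z) + b i) 0)
      = (fun i => max (inner ℝ (w i) x + b i) 0)
          + max (s * inner ℝ (w j₀) z) 0 • (Pi.single j₀ 1 : ι → ℝ) := by
  funext i
  simp only [inner_add_right, real_inner_smul_right, Pi.add_apply, Pi.smul_apply, smul_eq_mul]
  rcases eq_or_ne i j₀ with rfl | hi
  · rw [Pi.single_eq_same, mul_one, add_right_comm, hx, zero_add, max_self, zero_add]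
  · rw [hz i hi, Pi.single_eq_of_ne hi, mul_zero, mul_zero, add_zero, add_zero]

lemma eventually_apply_add_smul_ne_of_tendsto_slope {V : Type*} [AddCommGroup V] [Module ℝ V]
    {F : V → ℝ} {y v : V} {D : ℝ} (hD : D ≠ 0)
    (h : Tendsto (fun t : ℝ => (F (y + t • v) - F y) / t) (𝓝[>] 0) (𝓝 D)) :
    ∀ᶠ t in 𝓝[>] (0 : ℝ), F (y + t • v) ≠ F y :=
  (h.eventually_ne hD).mono fun _ hslope heq => hslope (by rw [heq, sub_self, zero_div])

theorem sign_identification_test_general (d d₁ : ℕ)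
    (w : Fin d₁ → EuclideanSpace ℝ (Fin d))
    (b : Fin d₁ → ℝ) (F : (Fin d₁ → ℝ) → ℝ)
    -- F has nonzero one-sided directional derivatives in directions ± e_k on ℝ₊^{d₁}
    (hF : ∀ y : Fin d₁ → ℝ, (∀ i, 0 ≤ y i) → ∀ k : Fin d₁,
      (∃ D : ℝ, D ≠ 0 ∧ Filter.Tendsto
        (fun t : ℝ => (F (y + t • (Pi.single k 1 : Fin d₁ → ℝ)) - F y) / t)
        (nhdsWithin 0 (Set.Ioi 0)) (nhds D)) ∧
      (∃ D : ℝ, D ≠ 0 ∧ Filter.Tendsto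
        (fun t : ℝ => (F (y - t • (Pi.single k 1 : Fin d₁ → ℝ)) - F y) / t)
        (nhdsWithin 0 (Set.Ioi 0)) (nhds D)))
    (N : EuclideanSpace ℝ (Fin d) → ℝ)
    (hN : ∀ x, N x = F fun i => max (inner ℝ (w i) x + b i) 0)
    (j₀ : Fin d₁) (x : EuclideanSpace ℝ (Fin d))
    (hx1 : inner ℝ (w j₀) x + b j₀ = (0 : ℝ))
    (z : EuclideanSpace ℝ (Fin d))
    (hzi : ∀ i, i ≠ j₀ → inner ℝ (w i) z = (0 : ℝ))
    (hz1 : 0 < (inner ℝ (w j₀) z : ℝ)) :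
    ∃ ε₀ > 0, ∀ ε : ℝ, 0 < ε → ε < ε₀ →
      N (x + ε • z) ≠ N x ∧ N (x - ε • z) = N x := by
  have hN_line : ∀ s : ℝ, N (x + s • z) = F ((fun i => max (inner ℝ (w i) x + b i) 0)
      + max (s * inner ℝ (w j₀) z) 0 • (Pi.single j₀ 1 : Fin d₁ → ℝ)) := fun s => by
    rw [hN, relu_affine_add_smul_eq_add_single w b hx1 hzi]
  obtain ⟨⟨D, hD, hslope⟩, -⟩ := hF _ (fun i => le_max_right _ _) j₀
  have h_moves : ∀ᶠ ε in 𝓝[>] (0 : ℝ), N (x + ε • z) ≠ N x := by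
    filter_upwards [eventually_nhdsGT_zero_mul_left hz1
      (eventually_apply_add_smul_ne_of_tendsto_slope hD hslope), self_mem_nhdsWithin]
      with ε hne (hε : 0 < ε)
    rwa [hN_line, max_eq_left (mul_pos hε hz1).le, hN x, mul_comm]
  obtain ⟨ε₀, hε₀, h_sub⟩ := mem_nhdsGT_iff_exists_Ioo_subset.1 h_moves
  refine ⟨ε₀, hε₀, fun ε hε hεε₀ => ⟨h_sub ⟨hε, hεε₀⟩, ?_⟩⟩
  rw [sub_eq_add_neg, ← neg_smul, hN_line, max_eq_right (by nlinarith), zero_smul, add_zero, hN x]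

/-- sign-identification test for a first-layer neuron of a
depth-three ReLU network. -/
theorem sign_identification_test (d d₁ : ℕ)
    (w : Fin d₁ → EuclideanSpace ℝ (Fin d)) (hw : LinearIndependent ℝ w)
    (hwnorm : ∀ i, ‖w i‖ = 1)
    (b : Fin d₁ → ℝ) (F : (Fin d₁ → ℝ) → ℝ)
    -- F has nonzero one-sided directional derivatives in directions ± e_k on ℝ₊^{d₁}
    (hF : ∀ y : Fin d₁ → ℝ, (∀ i, 0 ≤ y i) → ∀ k : Fin d₁,
      (∃ D : ℝ, D ≠ 0 ∧ Filter.Tendsto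
        (fun t : ℝ => (F (y + t • (Pi.single k 1 : Fin d₁ → ℝ)) - F y) / t)
        (nhdsWithin 0 (Set.Ioi 0)) (nhds D)) ∧
      (∃ D : ℝ, D ≠ 0 ∧ Filter.Tendsto
        (fun t : ℝ => (F (y - t • (Pi.single k 1 : Fin d₁ → ℝ)) - F y) / t)
        (nhdsWithin 0 (Set.Ioi 0)) (nhds D)))
    (N : EuclideanSpace ℝ (Fin d) → ℝ)
    (hN : ∀ x, N x = F fun i => max (inner ℝ (w i) x + b i) 0)
    (j₀ : Fin d₁) (x : EuclideanSpace ℝ (Fin d))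
    (hx1 : inner ℝ (w j₀) x + b j₀ = (0 : ℝ))
    (hxi : ∀ i, i ≠ j₀ → 0 < (inner ℝ (w i) x : ℝ) + b i)
    (z : EuclideanSpace ℝ (Fin d)) (hz : ‖z‖ = 1)
    (hzi : ∀ i, i ≠ j₀ → inner ℝ (w i) z = (0 : ℝ))
    (hz1 : 0 < (inner ℝ (w j₀) z : ℝ)) :
    ∃ ε₀ > 0, ∀ ε : ℝ, 0 < ε → ε < ε₀ →
      N (x + ε • z) ≠ N x ∧ N (x - ε • z) = N x :=
  sign_identification_test_general d d₁ w b F hF N hN j₀ x hx1 z hzi hz1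
end

section
/- Let Λ : ℝ^d → ℝ^{d₁} be an affine map, Λ(x) = (w_1·x + b_1, …, w_{d₁}·x + b_{d₁}). Then the hypothesis class H = {j ↦ sign(Λ(x)(j)) : x ∈ ℝ^d, Λ(x)(j) ≠ 0 for all j} of sign patterns realized on the d₁ coordinates by the image of Λ has cardinality at most Σ_{i=0}^{d+1} C(d₁, i). -/
/-!
The image of an affine map `ℝ^d → ℝ^{d₁}` spans a subspace `W` of dimension at most `d + 1`.
The sets of coordinates on which vectors of `W` are positive shatter no set `t` with
`|t| > dim W`: the coordinate functionals on `t` then satisfy a relation `∑ g j * v j = 0` on `W`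
with some `g j > 0`, and a vector `v` positive exactly where `g` is on `t` makes every term
nonnegative and one positive. So this family has VC dimension at most `d + 1`, and the
Sauer–Shelah lemma bounds its size. A sign pattern of a vector without zero coordinates is
determined by the set of coordinates where it is positive.
-/

open Finset Module

theorem Finset.card_le_sum_choose_of_vcDim_le {α : Type*} [Fintype α] [DecidableEq α]
    {𝒜 : Finset (Finset α)} {n : ℕ} (h : 𝒜.vcDim ≤ n) :
    #𝒜 ≤ ∑ i ∈ range (n + 1), (Fintype.card α).choose i :=
  calc #𝒜 ≤ #𝒜.shatterer := card_le_card_shatterer 𝒜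
    _ ≤ ∑ i ∈ Iic 𝒜.vcDim, (Fintype.card α).choose i := card_shatterer_le_sum_vcDim
    _ ≤ ∑ i ∈ range (n + 1), (Fintype.card α).choose i := by
      rw [Nat.range_succ_eq_Iic]
      exact sum_le_sum_of_subset (Iic_subset_Iic.2 h)

theorem AffineMap.finrank_span_range_le {k E F : Type*} [Field k] [AddCommGroup E] [Module k E]
    [FiniteDimensional k E] [AddCommGroup F] [Module k F] (f : E →ᵃ[k] F) :
    finrank k (Submodule.span k (Set.range f)) ≤ finrank k E + 1 := by
  set L : E × k →ₗ[k] F := f.linear.coprod (LinearMap.toSpanSingleton k F (f 0))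
  have hspan : Submodule.span k (Set.range f) ≤ LinearMap.range L := by
    refine Submodule.span_le.2 ?_
    rintro _ ⟨x, rfl⟩
    exact ⟨(x, 1), by simpa [L] using (congrFun f.decomp x).symm⟩
  calc finrank k (Submodule.span k (Set.range f)) ≤ finrank k (LinearMap.range L) :=
        Submodule.finrank_mono hspan
    _ ≤ finrank k (E × k) := L.finrank_range_le
    _ = finrank k E + 1 := by rw [finrank_prod, finrank_self]

section PositiveSets

variable {ι : Type*} [Fintype ι]

noncomputable def positiveSets (S : Set (ι → ℝ)) : Finset (Finset ι) :=
  (Set.toFinite {s : Finset ι | ∃ v ∈ S, ∀ j, j ∈ s ↔ 0 < v j}).toFinset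

theorem mem_positiveSets {S : Set (ι → ℝ)} {s : Finset ι} :
    s ∈ positiveSets S ↔ ∃ v ∈ S, ∀ j, j ∈ s ↔ 0 < v j :=
  Set.Finite.mem_toFinset _

theorem positiveSets_mono {S T : Set (ι → ℝ)} (h : S ⊆ T) : positiveSets S ⊆ positiveSets T :=
  fun _ hs ↦ by
    obtain ⟨v, hv, hvs⟩ := mem_positiveSets.1 hs
    exact mem_positiveSets.2 ⟨v, h hv, hvs⟩

theorem Submodule.exists_relation_of_finrank_lt (W : Submodule ℝ (ι → ℝ)) {t : Finset ι}
    (ht : finrank ℝ W < #t) :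
    ∃ g : ι → ℝ, (∀ v ∈ W, ∑ j ∈ t, g j * v j = 0) ∧ ∃ j ∈ t, 0 < g j := by
  set φ : ι → Dual ℝ W := fun j ↦ (LinearMap.proj j).comp W.subtype
  have hdep : ¬ LinearIndepOn ℝ φ (t : Set ι) := fun h ↦ by
    have := h.fintype_card_le_finrank
    simp only [coe_sort_coe, Fintype.card_coe, Subspace.dual_finrank_eq] at this
    omega
  obtain ⟨g, hg, j, hj, hgj⟩ := not_linearIndepOn_finset_iff.1 hdep
  have hrel : ∀ v ∈ W, ∑ j ∈ t, g j * v j = 0 := fun v hv ↦ by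
    simpa [φ] using DFunLike.congr_fun hg ⟨v, hv⟩
  rcases hgj.lt_or_gt with hneg | hpos
  · refine ⟨-g, fun v hv ↦ ?_, j, hj, neg_pos.2 hneg⟩
    simp only [Pi.neg_apply, neg_mul, sum_neg_distrib, hrel v hv, neg_zero]
  · exact ⟨g, hrel, j, hj, hpos⟩

variable [DecidableEq ι]

theorem Submodule.card_le_finrank_of_shatters (W : Submodule ℝ (ι → ℝ)) {t : Finset ι}
    (h : (positiveSets (W : Set (ι → ℝ))).Shatters t) : #t ≤ finrank ℝ W := by
  by_contra! ht
  obtain ⟨g, hrel, j₀, hj₀, hgj₀⟩ := W.exists_relation_of_finrank_lt ht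
  obtain ⟨s, hs, hts⟩ := h (filter_subset (fun j ↦ 0 < g j) t)
  obtain ⟨v, hv, hvs⟩ := mem_positiveSets.1 hs
  have hpos_iff : ∀ j ∈ t, 0 < g j ↔ 0 < v j := fun j hj ↦ by
    have hj' : j ∈ t ∩ s ↔ j ∈ t.filter (0 < g ·) := by rw [hts]
    simpa only [mem_inter, mem_filter, hj, true_and, hvs] using hj'.symm
  have hterm : ∀ j ∈ t, 0 ≤ g j * v j := fun j hj ↦ by
    rcases le_or_gt (g j) 0 with hg | hg
    · exact mul_nonneg_of_nonpos_of_nonpos hg (not_lt.1 ((hpos_iff j hj).not.1 hg.not_gt))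
    · exact (mul_pos hg ((hpos_iff j hj).1 hg)).le
  have : 0 < ∑ j ∈ t, g j * v j :=
    sum_pos' hterm ⟨j₀, hj₀, mul_pos hgj₀ ((hpos_iff j₀ hj₀).1 hgj₀)⟩
  exact this.ne' (hrel v hv)

theorem Submodule.vcDim_positiveSets_le (W : Submodule ℝ (ι → ℝ)) :
    (positiveSets (W : Set (ι → ℝ))).vcDim ≤ finrank ℝ W :=
  Finset.sup_le fun _ ht ↦ W.card_le_finrank_of_shatters (mem_shatterer.1 ht)

theorem AffineMap.card_positiveSets_range_le {E : Type*} [AddCommGroup E] [Module ℝ E]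
    [FiniteDimensional ℝ E] (f : E →ᵃ[ℝ] ι → ℝ) :
    #(positiveSets (Set.range f)) ≤ ∑ i ∈ range (finrank ℝ E + 2), (Fintype.card ι).choose i := by
  refine card_le_sum_choose_of_vcDim_le ?_
  calc (positiveSets (Set.range f)).vcDim
      ≤ (positiveSets (Submodule.span ℝ (Set.range f) : Set (ι → ℝ))).vcDim :=
        vcDim_mono (positiveSets_mono Submodule.subset_span)
    _ ≤ finrank ℝ (Submodule.span ℝ (Set.range f)) := Submodule.vcDim_positiveSets_le _
    _ ≤ finrank ℝ E + 1 := f.finrank_span_range_le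

end PositiveSets

theorem Real.sign_eq_ite_of_ne_zero {r : ℝ} (hr : r ≠ 0) :
    Real.sign r = if 0 < r then 1 else -1 := by
  rcases hr.lt_or_gt with hneg | hpos
  · rw [Real.sign_of_neg hneg, if_neg hneg.not_gt]
  · rw [Real.sign_of_pos hpos, if_pos hpos]

/-- the number of sign patterns realized by an affine map
`Λ : ℝ^d → ℝ^{d₁}` on its `d₁` coordinates is at most `∑_{i=0}^{d+1} C(d₁, i)`. -/
theorem sign_patterns_card_le (d d₁ : ℕ)
    (w : Fin d₁ → Fin d → ℝ) (b : Fin d₁ → ℝ) :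
    let H : Set (Fin d₁ → ℝ) :=
      {s | ∃ x : Fin d → ℝ, (∀ j, ∑ k, w j k * x k + b j ≠ 0) ∧
        ∀ j, s j = Real.sign (∑ k, w j k * x k + b j)}
    H.Finite ∧ H.ncard ≤ ∑ i ∈ Finset.range (d + 2), Nat.choose d₁ i := by
  intro H
  set f : (Fin d → ℝ) →ᵃ[ℝ] Fin d₁ → ℝ :=
    (Matrix.of w).mulVecLin.toAffineMap + AffineMap.const ℝ _ b
  have hf : ∀ x j, f x j = ∑ k, w j k * x k + b j := fun x j ↦ by
    simp [f, Matrix.mulVec, dotProduct]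
  set signVector : Finset (Fin d₁) → Fin d₁ → ℝ := fun s j ↦ if j ∈ s then 1 else -1
  have hH : H ⊆ signVector '' positiveSets (Set.range f) := by
    rintro s ⟨x, hx0, hs⟩
    refine ⟨univ.filter (0 < f x ·), mem_positiveSets.2 ⟨f x, ⟨x, rfl⟩, by simp⟩,
      funext fun j ↦ ?_⟩
    rw [hs, Real.sign_eq_ite_of_ne_zero (hx0 j)]
    simp [signVector, hf]
  have hfin : (signVector '' positiveSets (Set.range f)).Finite := (finite_toSet _).image _
  refine ⟨hfin.subset hH, ?_⟩
  calc H.ncard ≤ (signVector '' positiveSets (Set.range f)).ncard := Set.ncard_le_ncard hH hfin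
    _ ≤ #(positiveSets (Set.range f)) :=
      (Set.ncard_image_le (finite_toSet _)).trans_eq (Set.ncard_coe_finset _)
    _ ≤ ∑ i ∈ Finset.range (d + 2), Nat.choose d₁ i := by
      simpa using f.card_positiveSets_range_le
end

section
/- Let (w_j, b_j) ∈ ℝ^d × ℝ, j = 1, …, d₁, be independent random variables each with a symmetric distribution (i.e., (w_j, b_j) has the same law as (−w_j, −b_j)), and let Λ(x) = (w_1·x + b_1, …, w_{d₁}·x + b_{d₁}). Suppose almost surely the number of orthants of ℝ^{d₁} intersected by Λ(ℝ^d) is at most (e·d₁/d)^{d+1}. Then the probability that Λ(ℝ^d) intersects the open negative orthant ℝ₋^{d₁} is at most (e·d₁/d)^{d+1} / 2^{d₁}. -/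
open MeasureTheory ProbabilityTheory
open scoped ENNReal

/-!
Flipping the sign of `(w_j, b_j)` for every `j` with `ε_j = +` turns the event "the image of `Λ`
meets the orthant `ε`" into the event "it meets `ℝ₋^{d₁}`", and by independence and symmetry the
flip does not change the joint law. Hence all `2^{d₁}` orthant events have the same probability,
and their probabilities add up to the expected number of orthants met, which is at most the bound.
-/

theorem Set.sum_indicator_one_eq_ncard {Ω ι : Type*} [Fintype ι] (A : ι → Set Ω) (ω : Ω) :
    ∑ i, (A i).indicator (1 : Ω → ℝ≥0∞) ω = {i | ω ∈ A i}.ncard := by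
  classical
  rw [Set.ncard_eq_toFinset_card', Finset.card_eq_sum_ones, Nat.cast_sum, Set.toFinset_ofPred,
    Finset.sum_filter]
  simp [Set.indicator_apply]

section Counting

variable {Ω ι : Type*} [MeasurableSpace Ω] [Fintype ι] {μ : Measure Ω} {A : ι → Set Ω}

theorem sum_measure_le_of_ae_ncard_le [IsProbabilityMeasure μ]
    (hA : ∀ i, NullMeasurableSet (A i) μ) {B : ℝ}
    (hB : ∀ᵐ ω ∂μ, ({i | ω ∈ A i}.ncard : ℝ) ≤ B) :
    ∑ i, μ (A i) ≤ ENNReal.ofReal B :=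
  calc ∑ i, μ (A i) = ∫⁻ ω, ∑ i, (A i).indicator 1 ω ∂μ := by
        rw [lintegral_finsetSum' _ fun i _ => (measurable_one.aemeasurable.indicator₀ (hA i))]
        simp only [lintegral_indicator_one₀ (hA _)]
    _ = ∫⁻ ω, ({i | ω ∈ A i}.ncard : ℝ≥0∞) ∂μ := by simp only [Set.sum_indicator_one_eq_ncard]
    _ ≤ ∫⁻ _, ENNReal.ofReal B ∂μ := lintegral_mono_ae <| hB.mono fun ω hω => by
        rw [← ENNReal.ofReal_natCast]; exact ENNReal.ofReal_le_ofReal hω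
    _ = ENNReal.ofReal B := by simp

theorem measure_le_div_card_of_ae_ncard_le [IsProbabilityMeasure μ] [Nonempty ι]
    (hA : ∀ i, NullMeasurableSet (A i) μ) {m : ℝ≥0∞} (hm : ∀ i, μ (A i) = m) {B : ℝ}
    (hB : ∀ᵐ ω ∂μ, ({i | ω ∈ A i}.ncard : ℝ) ≤ B) :
    m ≤ ENNReal.ofReal (B / Fintype.card ι) := by
  have hsum := sum_measure_le_of_ae_ncard_le hA hB
  simp only [hm, Finset.sum_const, Finset.card_univ, nsmul_eq_mul] at hsum
  rw [ENNReal.ofReal_div_of_pos (by exact_mod_cast Fintype.card_pos), ENNReal.ofReal_natCast,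
    ENNReal.le_div_iff_mul_le (by simp) (by simp), mul_comm]
  exact hsum

end Counting

theorem ProbabilityTheory.iIndepFun.identDistrib_negIf {Ω ι : Type*} [Countable ι]
    [MeasurableSpace Ω] {μ : Measure Ω} {E : ι → Type*} [∀ i, MeasurableSpace (E i)]
    [∀ i, Neg (E i)] [∀ i, MeasurableNeg (E i)] {X : (i : ι) → Ω → E i} (hX : iIndepFun X μ)
    (hsymm : ∀ i, IdentDistrib (X i) (fun ω => -X i ω) μ μ) (ε : ι → Bool) :
    IdentDistrib (fun ω i => if ε i then -X i ω else X i ω) (fun ω i => X i ω) μ μ := by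
  refine IdentDistrib.pi (fun i => ?_) (hX.comp (fun i x => if ε i then -x else x) fun i => ?_) hX
  · cases ε i
    · exact IdentDistrib.refl (hsymm i).aemeasurable_fst
    · exact (hsymm i).symm
  · cases ε i
    · exact measurable_id
    · exact measurable_neg

def meetsNegOrthant (ι κ : Type*) [Fintype κ] : Set (ι → (κ → ℝ) × ℝ) :=
  {θ | ∃ x : κ → ℝ, ∀ j, ∑ k, (θ j).1 k * x k + (θ j).2 < 0}

theorem isOpen_meetsNegOrthant (ι κ : Type*) [Finite ι] [Fintype κ] :
    IsOpen (meetsNegOrthant ι κ) := by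
  have : meetsNegOrthant ι κ =
      ⋃ x : κ → ℝ, ⋂ j, {θ | ∑ k, (θ j).1 k * x k + (θ j).2 < 0} := by
    ext θ; simp [meetsNegOrthant]
  rw [this]
  exact isOpen_iUnion fun x => isOpen_iInter_of_finite fun j =>
    isOpen_lt (by fun_prop) continuous_const

theorem negIf_mem_meetsNegOrthant_iff {ι κ : Type*} [Fintype κ] (ε : ι → Bool)
    (θ : ι → (κ → ℝ) × ℝ) :
    (fun j => if ε j then -θ j else θ j) ∈ meetsNegOrthant ι κ ↔
      ∃ x : κ → ℝ, ∀ j, 0 < (if ε j then 1 else -1 : ℝ) * (∑ k, (θ j).1 k * x k + (θ j).2) := by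
  simp only [meetsNegOrthant, Set.mem_ofPred_eq]
  refine exists_congr fun x => forall_congr' fun j => ?_
  cases ε j <;> simp [Finset.sum_neg_distrib] <;> constructor <;> intro h <;> linarith

theorem prob_hits_negative_orthant_le_general
    {Ω : Type*} [MeasurableSpace Ω] (P : Measure Ω) [IsProbabilityMeasure P]
    (d d₁ : ℕ)
    (w : Fin d₁ → Ω → (Fin d → ℝ)) (b : Fin d₁ → Ω → ℝ)
    (hindep : iIndepFun (fun j ω => (w j ω, b j ω)) P)
    (hsymm : ∀ j, IdentDistrib (fun ω => (w j ω, b j ω))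
      (fun ω => (-(w j ω), -(b j ω))) P P)
    (horthants : ∀ᵐ ω ∂P,
      Set.ncard {ε : Fin d₁ → Bool |
          ∃ x : Fin d → ℝ, ∀ j,
            0 < (if ε j then 1 else -1 : ℝ) * (∑ k, w j ω k * x k + b j ω)} ≤
        (Real.exp 1 * d₁ / d) ^ (d + 1)) :
    P {ω | ∃ x : Fin d → ℝ, ∀ j, ∑ k, w j ω k * x k + b j ω < 0} ≤
      ENNReal.ofReal ((Real.exp 1 * d₁ / d) ^ (d + 1) / 2 ^ d₁) := by
  have hN := (isOpen_meetsNegOrthant (Fin d₁) (Fin d)).measurableSet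
  have hsymm' : ∀ j, IdentDistrib (fun ω => (w j ω, b j ω)) (fun ω => -(w j ω, b j ω)) P P :=
    hsymm
  have hlaw := hindep.identDistrib_negIf hsymm'
  set A : (Fin d₁ → Bool) → Set Ω := fun ε =>
    (fun ω j => if ε j then -(w j ω, b j ω) else (w j ω, b j ω)) ⁻¹'
      meetsNegOrthant (Fin d₁) (Fin d) with hA
  have hAnull : ∀ ε, NullMeasurableSet (A ε) P :=
    fun ε => (hlaw ε).aemeasurable_fst.nullMeasurable hN
  have hAeq : ∀ ε, P (A ε) =
      P ((fun ω j => (w j ω, b j ω)) ⁻¹' meetsNegOrthant (Fin d₁) (Fin d)) :=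
    fun ε => (hlaw ε).measure_mem_eq hN
  have hcount : ∀ᵐ ω ∂P, ({ε | ω ∈ A ε}.ncard : ℝ) ≤ (Real.exp 1 * d₁ / d) ^ (d + 1) := by
    filter_upwards [horthants] with ω hω
    simpa only [hA, Set.mem_preimage, negIf_mem_meetsNegOrthant_iff] using hω
  have hle := measure_le_div_card_of_ae_ncard_le hAnull hAeq hcount
  rw [Fintype.card_fun, Fintype.card_bool, Fintype.card_fin, Nat.cast_pow, Nat.cast_two] at hle
  exact hle

/-- if the pairs `(w_j, b_j)` are independent and symmetric, and the
image of the affine map `Λ(x) = (w_j·x + b_j)_j` almost surely meets at most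
`(e d₁ / d)^{d+1}` orthants, then the probability that it meets the open negative
orthant is at most `(e d₁ / d)^{d+1} / 2^{d₁}`. -/
theorem prob_hits_negative_orthant_le
    {Ω : Type*} [MeasurableSpace Ω] (P : Measure Ω) [IsProbabilityMeasure P]
    (d d₁ : ℕ)
    (w : Fin d₁ → Ω → (Fin d → ℝ)) (b : Fin d₁ → Ω → ℝ)
    (hmeas : ∀ j, Measurable fun ω => (w j ω, b j ω))
    (hindep : iIndepFun (fun j ω => (w j ω, b j ω)) P)
    (hsymm : ∀ j, IdentDistrib (fun ω => (w j ω, b j ω))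
      (fun ω => (-(w j ω), -(b j ω))) P P)
    (horthants : ∀ᵐ ω ∂P,
      Set.ncard {ε : Fin d₁ → Bool |
          ∃ x : Fin d → ℝ, ∀ j,
            0 < (if ε j then 1 else -1 : ℝ) * (∑ k, w j ω k * x k + b j ω)} ≤
        (Real.exp 1 * d₁ / d) ^ (d + 1)) :
    P {ω | ∃ x : Fin d → ℝ, ∀ j, ∑ k, w j ω k * x k + b j ω < 0} ≤
      ENNReal.ofReal ((Real.exp 1 * d₁ / d) ^ (d + 1) / 2 ^ d₁) :=
  prob_hits_negative_orthant_le_general P d d₁ w b hindep hsymm horthants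
end
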